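/- Let W be a DMC with input alphabet X and output alphabet Y, and suppose y, y' ∈ Y are distinct output symbols such that for every x ∈ X, W(y|x) > 0 if and only if W(y'|x) > 0. Let W' be the DMC obtained by combining y and y' into a single new output symbol ŷ distinct from all other output symbols, i.e., W' has output alphabet (Y \ {y,y'}) ∪ {ŷ} with W'(ŷ|x) = W(y|x) + W(y'|x) and W'(z|x) = W(z|x) for z ∈ Y \ {y,y'}. Then the zero-undetected-error capacities coincide: C_eo(W') = C_eo(W). -/

import Mathlib

/-!
Merging `y₀` and `y₁` is a deterministic post-processing `φ` of the channel output. Because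
`y₀` and `y₁` are reachable from the same inputs, an output word `y` is compatible with a
codeword exactly when `φ ∘ y` is, so the set of messages compatible with `y` depends only on
`φ ∘ y`. Summing `Wⁿ` over the fibres of `φ` then shows that every code has the same erasure
probabilities on both channels, hence both channels have the same set of achievable rates.
-/

open scoped Classical
open Real Finset

/-- The `n`-letter extension of the channel `W : X → Y → ℝ` (here `W x y` is the
probability `W(y|x)`). -/
noncomputable def Wn {X Y : Type*} (W : X → Y → ℝ) (n : ℕ)
    (x : Fin n → X) (y : Fin n → Y) : ℝ :=
  ∏ j, W (x j) (y j)

noncomputable def erasureProb {X Y : Type*} [Fintype Y] (W : X → Y → ℝ) {n M : ℕ}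
    (c : Fin M → Fin n → X) (m : Fin M) : ℝ :=
  ∑ y ∈ Finset.univ.filter (fun y : Fin n → Y =>
      1 < (Finset.univ.filter (fun m' : Fin M => 0 < Wn W n (c m') y)).card),
    Wn W n (c m) y

noncomputable def Ceo {X Y : Type*} [Fintype Y] (W : X → Y → ℝ) : ℝ :=
  sSup (insert 0 {R : ℝ | 0 ≤ R ∧ ∀ δ : ℝ, 0 < δ →
    ∃ (n M : ℕ) (c : Fin M → Fin n → X), 1 ≤ n ∧
      Real.exp (n * R) ≤ (M : ℝ) ∧ ∀ m, erasureProb W c m < δ})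

section OutputMap

variable {X Y Y' : Type*}

theorem Wn_pos_iff {W : X → Y → ℝ} (hW0 : ∀ x y, 0 ≤ W x y) {n : ℕ} (x : Fin n → X)
    (y : Fin n → Y) : 0 < Wn W n x y ↔ ∀ j, 0 < W (x j) (y j) := by
  simp only [Wn, (Finset.prod_nonneg fun j _ => hW0 (x j) (y j)).lt_iff_ne', ne_eq,
    Finset.prod_eq_zero_iff, not_exists, not_and, Finset.mem_univ, true_implies,
    fun j => (hW0 (x j) (y j)).lt_iff_ne']

variable [Fintype Y] {W : X → Y → ℝ} {W' : X → Y' → ℝ} {φ : Y → Y'}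

theorem Ceo_congr [Fintype Y']
    (h : ∀ (n M : ℕ) (c : Fin M → Fin n → X) (m : Fin M),
      erasureProb W' c m = erasureProb W c m) :
    Ceo W' = Ceo W := by
  simp only [Ceo, h]

variable [DecidableEq Y']

theorem Wn_eq_sum_fiber (hfib : ∀ x z, W' x z = ∑ y ∈ univ.filter (fun y => φ y = z), W x y)
    {n : ℕ} (x : Fin n → X) (z : Fin n → Y') :
    Wn W' n x z =
      ∑ y ∈ univ.filter (fun y : Fin n → Y => (fun j => φ (y j)) = z), Wn W n x y := by
  have hpi : Fintype.piFinset (fun j => univ.filter (fun y => φ y = z j)) =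
      univ.filter (fun y : Fin n → Y => (fun j => φ (y j)) = z) := by
    ext y
    simp [funext_iff]
  simp only [Wn, hfib, Finset.prod_univ_sum, hpi]

theorem pos_apply_iff_of_fiber (hW0 : ∀ x y, 0 ≤ W x y)
    (hfib : ∀ x z, W' x z = ∑ y ∈ univ.filter (fun y => φ y = z), W x y)
    (hconst : ∀ x y y', φ y = φ y' → (0 < W x y ↔ 0 < W x y')) (x : X) (y : Y) :
    0 < W' x (φ y) ↔ 0 < W x y := by
  rw [hfib, Finset.sum_pos_iff_of_nonneg fun y' _ => hW0 x y']
  simp only [Finset.mem_filter, Finset.mem_univ, true_and]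
  exact ⟨fun ⟨y', hy', hpos⟩ => (hconst x y y' hy'.symm).2 hpos, fun hpos => ⟨y, rfl, hpos⟩⟩

theorem erasureProb_eq_of_fiber (hW0 : ∀ x y, 0 ≤ W x y)
    (hfib : ∀ x z, W' x z = ∑ y ∈ univ.filter (fun y => φ y = z), W x y)
    (hconst : ∀ x y y', φ y = φ y' → (0 < W x y ↔ 0 < W x y'))
    [Fintype Y'] {n M : ℕ} (c : Fin M → Fin n → X) (m : Fin M) :
    erasureProb W' c m = erasureProb W c m := by
  have hW'0 : ∀ x z, 0 ≤ W' x z := fun x z =>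
    (hfib x z).symm ▸ Finset.sum_nonneg fun y _ => hW0 x y
  have hcompat : ∀ (x : Fin n → X) (y : Fin n → Y),
      0 < Wn W' n x (fun j => φ (y j)) ↔ 0 < Wn W n x y := fun x y => by
    rw [Wn_pos_iff hW'0, Wn_pos_iff hW0]
    exact forall_congr' fun j => pos_apply_iff_of_fiber hW0 hfib hconst (x j) (y j)
  unfold erasureProb
  rw [Finset.sum_filter, Finset.sum_filter,
    ← Finset.sum_fiberwise univ (fun (y : Fin n → Y) j => φ (y j))]
  refine Finset.sum_congr rfl fun z _ => ?_
  rw [Wn_eq_sum_fiber hfib, ite_sum_zero]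
  refine Finset.sum_congr rfl fun y hy => ?_
  obtain rfl := (Finset.mem_filter.1 hy).2
  simp only [hcompat]

end OutputMap

section Merge

variable {Y : Type*} [DecidableEq Y] {y₀ y₁ : Y}

def mergeOutputs (y₀ y₁ : Y) (y : Y) : Option {z : Y // z ≠ y₀ ∧ z ≠ y₁} :=
  if h : y = y₀ ∨ y = y₁ then none else some ⟨y, not_or.mp h⟩

theorem mergeOutputs_eq_none_iff {y : Y} :
    mergeOutputs y₀ y₁ y = none ↔ y = y₀ ∨ y = y₁ := by
  unfold mergeOutputs
  split_ifs with h <;> simp [h]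

theorem mergeOutputs_eq_some_iff {y : Y} {w : {z : Y // z ≠ y₀ ∧ z ≠ y₁}} :
    mergeOutputs y₀ y₁ y = some w ↔ y = w.1 := by
  unfold mergeOutputs
  split_ifs with h
  · simp only [false_iff]
    rintro rfl
    exact h.elim w.2.1 w.2.2
  · simp [Subtype.ext_iff]

theorem eq_or_mem_pair_of_mergeOutputs_eq {y y' : Y}
    (h : mergeOutputs y₀ y₁ y = mergeOutputs y₀ y₁ y') :
    y = y' ∨ ((y = y₀ ∨ y = y₁) ∧ (y' = y₀ ∨ y' = y₁)) := by
  rcases hy : mergeOutputs y₀ y₁ y with _ | w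
  · rw [hy, eq_comm, mergeOutputs_eq_none_iff] at h
    exact Or.inr ⟨mergeOutputs_eq_none_iff.1 hy, h⟩
  · rw [hy, eq_comm, mergeOutputs_eq_some_iff] at h
    exact Or.inl ((mergeOutputs_eq_some_iff.1 hy).trans h.symm)

variable [Fintype Y] {M : Type*} [AddCommMonoid M]

theorem sum_fiber_mergeOutputs_none (hne : y₀ ≠ y₁) (f : Y → M) :
    ∑ y ∈ univ.filter (fun y => mergeOutputs y₀ y₁ y = none), f y = f y₀ + f y₁ := by
  rw [← Finset.sum_pair hne]
  congr 1
  ext y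
  simp [mergeOutputs_eq_none_iff]

theorem sum_fiber_mergeOutputs_some (w : {z : Y // z ≠ y₀ ∧ z ≠ y₁}) (f : Y → M) :
    ∑ y ∈ univ.filter (fun y => mergeOutputs y₀ y₁ y = some w), f y = f w.1 := by
  rw [← Finset.sum_singleton f w.1]
  congr 1
  ext y
  simp [mergeOutputs_eq_some_iff]

end Merge

/-- The new output alphabet is `Option {z : Y // z ≠ y₀ ∧ z ≠ y₁}`, where `none` plays the
role of the combined symbol `ŷ`. -/
theorem zue_capacity_combine_outputs {X Y : Type*} [Fintype Y]
    [DecidableEq Y]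
    (W : X → Y → ℝ) (hW0 : ∀ x y, 0 ≤ W x y)
    (y₀ y₁ : Y) (hne : y₀ ≠ y₁)
    (hiff : ∀ x, 0 < W x y₀ ↔ 0 < W x y₁) :
    Ceo (fun x (z : Option {z : Y // z ≠ y₀ ∧ z ≠ y₁}) =>
        match z with
        | none => W x y₀ + W x y₁
        | some z => W x z.1) = Ceo W := by
  refine Ceo_congr fun n M c m =>
    erasureProb_eq_of_fiber (φ := mergeOutputs y₀ y₁) hW0 ?_ ?_ c m
  · rintro x (_ | w)
    · exact (sum_fiber_mergeOutputs_none hne (W x)).symm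
    · exact (sum_fiber_mergeOutputs_some w (W x)).symm
  · intro x y y' h
    rcases eq_or_mem_pair_of_mergeOutputs_eq h with rfl | ⟨rfl | rfl, rfl | rfl⟩
    exacts [Iff.rfl, Iff.rfl, hiff x, (hiff x).symm, Iff.rfl]
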